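/- Let V be a Gödel set in which 0 is not isolated (i.e., V ∩ (0,ε) ≠ ∅ for every ε > 0), and let L contain a unary predicate A. Then the sentence F := ¬∀x A(x) ∧ ∀x ¬¬A(x) has no logically equivalent prenex sentence in G_V: there is no prenex L-sentence P with I(F)=I(P) for every V-interpretation I. -/

import Mathlib

/-!
Since 0 is not isolated in `V`, there is an interpretation on `ℕ` with `P(n) = cₙ ∈ V`,
all `cₙ > 0` and `inf cₙ = 0`; in it `¬∀x P(x)` and every `¬¬P(n)` have value 1, so `F` has
value 1. Gluing at 0 sends every atom of positive value to 1. On Δ-free quantifier-free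
formulas it acts on values by the same map (`0 ↦ 0`, positive values `↦ 1`), which commutes
with `min`, `max` and Gödel implication; so it can only raise their values, and monotonicity
of `inf` and `sup` carries this through any quantifier prefix. An equivalent prenex `Q` would
therefore have value 1 in the glued interpretation, where `P` is constantly 1 and `F` has
value 0.
-/

namespace GodelPaper

/-- A first-order language: function and relation symbols of each arity. -/
structure Lang where
  Func : ℕ → Type
  Rel : ℕ → Type

/-- A Gödel set: a closed subset of [0,1] containing 0 and 1. -/
def GodelSet (V : Set ℝ) : Prop :=
  IsClosed V ∧ V ⊆ Set.Icc 0 1 ∧ (0:ℝ) ∈ V ∧ (1:ℝ) ∈ V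

/-- Terms with variables from `α`. -/
inductive Term (L : Lang) (α : Type) : Type
  | var : α → Term L α
  | func : ∀ {k}, L.Func k → (Fin k → Term L α) → Term L α

/-- A `V`-interpretation: nonempty domain, interpretation of function symbols,
and truth values in `V` for atomic sentences with parameters. -/
structure Interp (L : Lang) (V : Set ℝ) where
  Dom : Type
  dom_nonempty : Nonempty Dom
  funMap : ∀ {k}, L.Func k → (Fin k → Dom) → Dom
  relVal : ∀ {k}, L.Rel k → (Fin k → Dom) → ℝ
  relVal_mem : ∀ {k} (R : L.Rel k) (v : Fin k → Dom), relVal R v ∈ V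

def Term.eval {L : Lang} {V : Set ℝ} (I : Interp L V) {α : Type} (v : α → I.Dom) :
    Term L α → I.Dom
  | .var i => v i
  | .func f ts => I.funMap f fun j => Term.eval I v (ts j)

/-- Formulas of the Δ-extended language, with free variables among `Fin n`.
The quantifiers bind the *last* variable. Δ-free formulas (i.e. formulas of the
plain language) are singled out by the predicate `DeltaFree` below. -/
inductive Form (L : Lang) : ℕ → Type
  | falsum : ∀ {n}, Form L n
  | atom : ∀ {n k}, L.Rel k → (Fin k → Term L (Fin n)) → Form L n
  | conj : ∀ {n}, Form L n → Form L n → Form L n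
  | disj : ∀ {n}, Form L n → Form L n → Form L n
  | impl : ∀ {n}, Form L n → Form L n → Form L n
  | delta : ∀ {n}, Form L n → Form L n
  | all : ∀ {n}, Form L (n+1) → Form L n
  | ex : ∀ {n}, Form L (n+1) → Form L n

/-- The Gödel truth value of a formula under an interpretation and an
assignment of the free variables. -/
noncomputable def Form.val {L : Lang} {V : Set ℝ} (I : Interp L V) :
    ∀ {n}, Form L n → (Fin n → I.Dom) → ℝ
  | _, .falsum, _ => 0
  | _, .atom R ts, ρ => I.relVal R fun j => Term.eval I ρ (ts j)
  | _, .conj A B, ρ => min (Form.val I A ρ) (Form.val I B ρ)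
  | _, .disj A B, ρ => max (Form.val I A ρ) (Form.val I B ρ)
  | _, .impl A B, ρ => if Form.val I A ρ ≤ Form.val I B ρ then 1 else Form.val I B ρ
  | _, .delta A, ρ => if Form.val I A ρ = 1 then 1 else 0
  | _, .all A, ρ => sInf {v : ℝ | ∃ d : I.Dom, v = Form.val I A (Fin.snoc ρ d)}
  | _, .ex A, ρ => sSup {v : ℝ | ∃ d : I.Dom, v = Form.val I A (Fin.snoc ρ d)}

/-- The value of a sentence. -/
noncomputable def Form.sval {L : Lang} {V : Set ℝ} (I : Interp L V) (A : Form L 0) : ℝ :=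
  Form.val I A Fin.elim0

/-- `A` is valid in `G_V`. -/
def Valid {L : Lang} (V : Set ℝ) (A : Form L 0) : Prop :=
  ∀ I : Interp L V, Form.sval I A = 1

/-- `A` is 1-satisfiable in `G_V`. -/
def OneSat {L : Lang} (V : Set ℝ) (A : Form L 0) : Prop :=
  ∃ I : Interp L V, Form.sval I A = 1

/-- `A` is classically satisfiable: it takes value 1 under a `V`-interpretation
assigning only values in {0,1} to atomic sentences. -/
def ClassSat {L : Lang} (V : Set ℝ) (A : Form L 0) : Prop :=
  ∃ I : Interp L V,
    (∀ {k : ℕ} (R : L.Rel k) (v : Fin k → I.Dom), I.relVal R v = 0 ∨ I.relVal R v = 1) ∧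
    Form.sval I A = 1

/-- ¬A abbreviates A ⊃ ⊥. -/
def Form.not {L : Lang} {n : ℕ} (A : Form L n) : Form L n := Form.impl A Form.falsum

/-- A ↔ B abbreviates (A ⊃ B) ∧ (B ⊃ A). -/
def Form.iff {L : Lang} {n : ℕ} (A B : Form L n) : Form L n :=
  Form.conj (Form.impl A B) (Form.impl B A)

/-- Formulas of the plain language (no Δ). -/
def DeltaFree {L : Lang} : ∀ {n}, Form L n → Prop
  | _, .falsum => True
  | _, .atom _ _ => True
  | _, .conj A B => DeltaFree A ∧ DeltaFree B
  | _, .disj A B => DeltaFree A ∧ DeltaFree B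
  | _, .impl A B => DeltaFree A ∧ DeltaFree B
  | _, .delta _ => False
  | _, .all A => DeltaFree A
  | _, .ex A => DeltaFree A

/-- Quantifier-free formulas. -/
def QuantFree {L : Lang} : ∀ {n}, Form L n → Prop
  | _, .falsum => True
  | _, .atom _ _ => True
  | _, .conj A B => QuantFree A ∧ QuantFree B
  | _, .disj A B => QuantFree A ∧ QuantFree B
  | _, .impl A B => QuantFree A ∧ QuantFree B
  | _, .delta A => QuantFree A
  | _, .all _ => False
  | _, .ex _ => False

/-- Formulas containing no universal quantifier. -/
def AllFree {L : Lang} : ∀ {n}, Form L n → Prop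
  | _, .falsum => True
  | _, .atom _ _ => True
  | _, .conj A B => AllFree A ∧ AllFree B
  | _, .disj A B => AllFree A ∧ AllFree B
  | _, .impl A B => AllFree A ∧ AllFree B
  | _, .delta A => AllFree A
  | _, .all _ => False
  | _, .ex A => AllFree A

/-- Prenex formulas: a block of quantifiers followed by a quantifier-free matrix. -/
inductive IsPrenex {L : Lang} : ∀ {n}, Form L n → Prop
  | qf {n} {A : Form L n} : QuantFree A → IsPrenex A
  | all {n} {A : Form L (n+1)} : IsPrenex A → IsPrenex (Form.all A)
  | ex {n} {A : Form L (n+1)} : IsPrenex A → IsPrenex (Form.ex A)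

/-- Purely existential prenex formulas. -/
inductive ExPrenex {L : Lang} : ∀ {n}, Form L n → Prop
  | qf {n} {A : Form L n} : QuantFree A → ExPrenex A
  | ex {n} {A : Form L (n+1)} : ExPrenex A → ExPrenex (Form.ex A)

/-- The glued interpretation `I_ω`: atoms with value ≤ ω keep their value,
all other atoms get value 1. Same domain and function interpretations. -/
noncomputable def Interp.glue {L : Lang} {V : Set ℝ} (I : Interp L V) (ω : ℝ)
    (h1 : (1:ℝ) ∈ V) : Interp L V where
  Dom := I.Dom
  dom_nonempty := I.dom_nonempty
  funMap := fun {k} f v => I.funMap f v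
  relVal := fun {k} R v => if I.relVal R v ≤ ω then I.relVal R v else 1
  relVal_mem := fun {k} R v => by
    by_cases h : I.relVal R v ≤ ω
    · simpa [h] using I.relVal_mem R v
    · simpa [h] using h1

/-- The Gödel set `V_↑ = {1 - 1/k : k ≥ 1} ∪ {1}`. -/
def Vup : Set ℝ := {x : ℝ | ∃ k : ℕ, 1 ≤ k ∧ x = 1 - 1/(k:ℝ)} ∪ {1}

/-- The `m`-element Gödel set `V_m = {1 - 1/k : 1 ≤ k ≤ m-1} ∪ {1}`. -/
def Vfin (m : ℕ) : Set ℝ :=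
  {x : ℝ | ∃ k : ℕ, 1 ≤ k ∧ k ≤ m - 1 ∧ x = 1 - 1/(k:ℝ)} ∪ {1}

/-- Atomic formula built from a unary predicate. -/
def atom1 {L : Lang} (P : L.Rel 1) {n : ℕ} (t : Term L (Fin n)) : Form L n :=
  Form.atom P fun _ => t

/-- Atomic formula built from a 0-ary predicate (propositional atom). -/
def atom0 {L : Lang} (X : L.Rel 0) {n : ℕ} : Form L n :=
  Form.atom X fun i => i.elim0

def Term.rename {L : Lang} {α β : Type} (f : α → β) : Term L α → Term L β
  | .var i => .var (f i)
  | .func g ts => .func g fun j => Term.rename f (ts j)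

def Form.rename {L : Lang} : ∀ {m n}, (Fin m → Fin n) → Form L m → Form L n
  | _, _, _, .falsum => .falsum
  | _, _, f, .atom R ts => .atom R fun j => (ts j).rename f
  | _, _, f, .conj A B => .conj (A.rename f) (B.rename f)
  | _, _, f, .disj A B => .disj (A.rename f) (B.rename f)
  | _, _, f, .impl A B => .impl (A.rename f) (B.rename f)
  | _, _, f, .delta A => .delta (A.rename f)
  | _, _, f, .all A =>
      .all (A.rename (Fin.lastCases (Fin.last _) fun i => Fin.castSucc (f i)))
  | _, _, f, .ex A =>
      .ex (A.rename (Fin.lastCases (Fin.last _) fun i => Fin.castSucc (f i)))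

/-- Weakening: regard a formula with `n` free variables as one with `n+1`
free variables (not using the new last variable). -/
def Form.lift {L : Lang} {n : ℕ} (A : Form L n) : Form L (n+1) :=
  A.rename Fin.castSucc

def Term.subst {L : Lang} {α β : Type} (σ : α → Term L β) : Term L α → Term L β
  | .var i => σ i
  | .func g ts => .func g fun j => Term.subst σ (ts j)

def Form.subst {L : Lang} : ∀ {m n}, (Fin m → Term L (Fin n)) → Form L m → Form L n
  | _, _, _, .falsum => .falsum
  | _, _, σ, .atom R ts => .atom R fun j => (ts j).subst σ
  | _, _, σ, .conj A B => .conj (A.subst σ) (B.subst σ)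
  | _, _, σ, .disj A B => .disj (A.subst σ) (B.subst σ)
  | _, _, σ, .impl A B => .impl (A.subst σ) (B.subst σ)
  | _, _, σ, .delta A => .delta (A.subst σ)
  | _, _, σ, .all A =>
      .all (A.subst (Fin.lastCases (.var (Fin.last _))
        fun i => (σ i).rename Fin.castSucc))
  | _, _, σ, .ex A =>
      .ex (A.subst (Fin.lastCases (.var (Fin.last _))
        fun i => (σ i).rename Fin.castSucc))

/-- The language `L ∪ {f}` with one new function symbol of arity `a`. -/
def Lang.addFunc (L : Lang) (a : ℕ) : Lang where
  Func := fun k => L.Func k ⊕ PLift (k = a)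
  Rel := L.Rel

/-- The new function symbol of `L.addFunc a`. -/
def newFunc (L : Lang) (a : ℕ) : (L.addFunc a).Func a := Sum.inr ⟨rfl⟩

def Term.emb {L : Lang} {a : ℕ} {α : Type} : Term L α → Term (L.addFunc a) α
  | .var i => .var i
  | .func g ts => .func (Sum.inl g) fun j => Term.emb (ts j)

/-- Embedding of `L`-formulas into the language with the extra function symbol. -/
def Form.emb {L : Lang} {a : ℕ} : ∀ {n}, Form L n → Form (L.addFunc a) n
  | _, .falsum => .falsum
  | _, .atom R ts => .atom R fun j => (ts j).emb
  | _, .conj A B => .conj A.emb B.emb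
  | _, .disj A B => .disj A.emb B.emb
  | _, .impl A B => .impl A.emb B.emb
  | _, .delta A => .delta A.emb
  | _, .all A => .all A.emb
  | _, .ex A => .ex A.emb

/-- Prefix of `n` existential quantifiers (outermost quantifier binds variable 0). -/
def Form.exN {L : Lang} : ∀ n, Form L n → Form L 0
  | 0, A => A
  | n+1, A => Form.exN n (Form.ex A)

/-- Prefix of `n` universal quantifiers (outermost quantifier binds variable 0). -/
def Form.allN {L : Lang} : ∀ n, Form L n → Form L 0
  | 0, A => A
  | n+1, A => Form.allN n (Form.all A)

section

variable {L : Lang} {V : Set ℝ}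

noncomputable def godelImp (a b : ℝ) : ℝ := if a ≤ b then 1 else b

theorem Form.val_impl (I : Interp L V) {n : ℕ} (A B : Form L n) (ρ : Fin n → I.Dom) :
    Form.val I (.impl A B) ρ = godelImp (Form.val I A ρ) (Form.val I B ρ) := rfl

theorem Form.val_all (I : Interp L V) {n : ℕ} (A : Form L (n + 1)) (ρ : Fin n → I.Dom) :
    Form.val I (.all A) ρ = ⨅ d, Form.val I A (Fin.snoc ρ d) :=
  congrArg sInf (Set.ext fun _ => exists_congr fun _ => eq_comm)

theorem Form.val_ex (I : Interp L V) {n : ℕ} (A : Form L (n + 1)) (ρ : Fin n → I.Dom) :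
    Form.val I (.ex A) ρ = ⨆ d, Form.val I A (Fin.snoc ρ d) :=
  congrArg sSup (Set.ext fun _ => exists_congr fun _ => eq_comm)

theorem Form.val_mem_Icc (hV : V ⊆ Set.Icc 0 1) (I : Interp L V) {n : ℕ} (A : Form L n)
    (ρ : Fin n → I.Dom) : Form.val I A ρ ∈ Set.Icc (0 : ℝ) 1 := by
  have := I.dom_nonempty
  induction A with
  | falsum => exact ⟨le_rfl, zero_le_one⟩
  | atom R ts => exact hV (I.relVal_mem _ _)
  | conj A B ihA ihB =>
    exact ⟨le_min (ihA ρ).1 (ihB ρ).1, min_le_of_left_le (ihA ρ).2⟩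
  | disj A B ihA ihB =>
    exact ⟨le_max_of_le_left (ihA ρ).1, max_le (ihA ρ).2 (ihB ρ).2⟩
  | impl A B ihA ihB =>
    rw [Form.val_impl, godelImp]
    split_ifs
    exacts [⟨zero_le_one, le_rfl⟩, ihB ρ]
  | delta A ih =>
    simp only [Form.val]
    split_ifs
    exacts [⟨zero_le_one, le_rfl⟩, ⟨le_rfl, zero_le_one⟩]
  | all A ih =>
    rw [Form.val_all]
    obtain ⟨d⟩ := I.dom_nonempty
    have hbdd : BddBelow (Set.range fun e => Form.val I A (Fin.snoc ρ e)) :=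
      ⟨0, by rintro _ ⟨e, rfl⟩; exact (ih _).1⟩
    exact ⟨le_ciInf fun e => (ih (Fin.snoc ρ e)).1, (ciInf_le hbdd d).trans (ih _).2⟩
  | ex A ih =>
    rw [Form.val_ex]
    obtain ⟨d⟩ := I.dom_nonempty
    have hbdd : BddAbove (Set.range fun e => Form.val I A (Fin.snoc ρ e)) :=
      ⟨1, by rintro _ ⟨e, rfl⟩; exact (ih _).2⟩
    exact ⟨(ih _).1.trans (le_ciSup hbdd d), ciSup_le fun e => (ih (Fin.snoc ρ e)).2⟩

theorem Form.bddBelow_range_val (hV : V ⊆ Set.Icc 0 1) (I : Interp L V) {n : ℕ}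
    (A : Form L n) (f : I.Dom → Fin n → I.Dom) :
    BddBelow (Set.range fun d => Form.val I A (f d)) :=
  ⟨0, by rintro _ ⟨d, rfl⟩; exact (Form.val_mem_Icc hV I A _).1⟩

theorem Form.bddAbove_range_val (hV : V ⊆ Set.Icc 0 1) (I : Interp L V) {n : ℕ}
    (A : Form L n) (f : I.Dom → Fin n → I.Dom) :
    BddAbove (Set.range fun d => Form.val I A (f d)) :=
  ⟨1, by rintro _ ⟨d, rfl⟩; exact (Form.val_mem_Icc hV I A _).2⟩

noncomputable def raiseAbove (ω x : ℝ) : ℝ := if x ≤ ω then x else 1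

theorem raiseAbove_of_lt {ω x : ℝ} (h : ω < x) : raiseAbove ω x = 1 := if_neg h.not_ge

theorem le_raiseAbove {ω x : ℝ} (hx : x ≤ 1) : x ≤ raiseAbove ω x := by
  unfold raiseAbove; split_ifs <;> linarith

theorem raiseAbove_monotone {ω : ℝ} (hω : ω ≤ 1) : Monotone (raiseAbove ω) := by
  intro x y hxy; unfold raiseAbove; split_ifs <;> linarith

theorem raiseAbove_godelImp {ω : ℝ} (hω : ω ≤ 1) (a b : ℝ) :
    raiseAbove ω (godelImp a b) = godelImp (raiseAbove ω a) (raiseAbove ω b) := by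
  unfold raiseAbove godelImp; split_ifs <;> linarith

theorem Interp.glue_relVal (I : Interp L V) (ω : ℝ) (h1 : (1 : ℝ) ∈ V) {k : ℕ} (R : L.Rel k)
    (v : Fin k → I.Dom) : (I.glue ω h1).relVal R v = raiseAbove ω (I.relVal R v) := rfl

theorem Term.eval_glue (I : Interp L V) (ω : ℝ) (h1 : (1 : ℝ) ∈ V) {α : Type}
    (v : α → I.Dom) (t : Term L α) : Term.eval (I.glue ω h1) v t = Term.eval I v t := by
  induction t with
  | var i => rfl
  | func f ts ih => exact congrArg (I.funMap f) (funext ih)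

theorem Form.val_glue_of_quantFree (I : Interp L V) {ω : ℝ} (h1 : (1 : ℝ) ∈ V) (hω₀ : 0 ≤ ω)
    (hω₁ : ω ≤ 1) {n : ℕ} {A : Form L n} (hq : QuantFree A) (hΔ : DeltaFree A)
    (ρ : Fin n → I.Dom) : Form.val (I.glue ω h1) A ρ = raiseAbove ω (Form.val I A ρ) := by
  induction A with
  | falsum => exact (if_pos hω₀).symm
  | atom R ts =>
    show (I.glue ω h1).relVal R _ = _
    simp only [Term.eval_glue, Interp.glue_relVal]
    rfl
  | conj A B ihA ihB =>
    show min _ _ = _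
    rw [ihA hq.1 hΔ.1, ihB hq.2 hΔ.2]
    exact (raiseAbove_monotone hω₁).map_min.symm
  | disj A B ihA ihB =>
    show max _ _ = _
    rw [ihA hq.1 hΔ.1, ihB hq.2 hΔ.2]
    exact (raiseAbove_monotone hω₁).map_max.symm
  | impl A B ihA ihB =>
    show godelImp _ _ = _
    rw [ihA hq.1 hΔ.1, ihB hq.2 hΔ.2]
    exact (raiseAbove_godelImp hω₁ _ _).symm
  | delta => exact hΔ.elim
  | all => exact hq.elim
  | ex => exact hq.elim

theorem Form.val_le_val_glue_of_isPrenex (hV : V ⊆ Set.Icc 0 1) (I : Interp L V) {ω : ℝ}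
    (h1 : (1 : ℝ) ∈ V) (hω₀ : 0 ≤ ω) (hω₁ : ω ≤ 1) {n : ℕ} {A : Form L n} (hA : IsPrenex A)
    (hΔ : DeltaFree A) (ρ : Fin n → I.Dom) : Form.val I A ρ ≤ Form.val (I.glue ω h1) A ρ := by
  induction hA with
  | qf hq =>
    rw [Form.val_glue_of_quantFree I h1 hω₀ hω₁ hq hΔ]
    exact le_raiseAbove (Form.val_mem_Icc hV I _ ρ).2
  | @all _ A _ ih =>
    calc Form.val I (.all A) ρ = ⨅ d, Form.val I A (Fin.snoc ρ d) := Form.val_all I A ρ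
      _ ≤ ⨅ d, Form.val (I.glue ω h1) A (Fin.snoc ρ d) :=
        ciInf_mono (Form.bddBelow_range_val hV I _ _) fun d => ih hΔ _
      _ = Form.val (I.glue ω h1) (.all A) ρ := (Form.val_all (I.glue ω h1) A ρ).symm
  | @ex _ A _ ih =>
    calc Form.val I (.ex A) ρ = ⨆ d, Form.val I A (Fin.snoc ρ d) := Form.val_ex I A ρ
      _ ≤ ⨆ d, Form.val (I.glue ω h1) A (Fin.snoc ρ d) :=
        ciSup_mono (Form.bddAbove_range_val hV (I.glue ω h1) _ _) fun d => ih hΔ _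
      _ = Form.val (I.glue ω h1) (.ex A) ρ := (Form.val_ex (I.glue ω h1) A ρ).symm

def notAllAndAllNotNot (P : L.Rel 1) : Form L 0 :=
  .conj (.not (.all (atom1 P (.var 0)))) (.all (.not (.not (atom1 P (.var 0)))))

theorem sval_notAllAndAllNotNot (I : Interp L V) (P : L.Rel 1) :
    Form.sval I (notAllAndAllNotNot P) =
      min (godelImp (⨅ d, I.relVal P fun _ => d) 0)
        (⨅ d, godelImp (godelImp (I.relVal P fun _ => d) 0) 0) := by
  show min (godelImp (Form.val I (.all _) Fin.elim0) 0) (Form.val I (.all _) Fin.elim0) = _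
  rw [Form.val_all, Form.val_all]
  rfl

theorem sval_notAllAndAllNotNot_eq_one (I : Interp L V) (P : L.Rel 1)
    (hpos : ∀ d, 0 < I.relVal P fun _ => d) (hinf : ⨅ d, I.relVal P (fun _ => d) = 0) :
    Form.sval I (notAllAndAllNotNot P) = 1 := by
  have := I.dom_nonempty
  simp [sval_notAllAndAllNotNot, godelImp, hinf, (hpos _).not_ge]

theorem sval_notAllAndAllNotNot_eq_zero (I : Interp L V) (P : L.Rel 1)
    (hinf : 0 < ⨅ d, I.relVal P fun _ => d) : Form.sval I (notAllAndAllNotNot P) = 0 := by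
  rw [sval_notAllAndAllNotNot, godelImp, if_neg hinf.not_ge]
  refine min_eq_left (Real.iInf_nonneg fun d => ?_)
  unfold godelImp; split_ifs <;> norm_num

/-- Every atom `R(n, …)` gets value `c n`; nullary atoms get `c 0`. -/
def Interp.ofSeq (L : Lang) (c : ℕ → ℝ) (hc : ∀ n, c n ∈ V) : Interp L V where
  Dom := ℕ
  dom_nonempty := ⟨0⟩
  funMap _ _ := 0
  relVal {k} _ v := c (if h : 0 < k then v ⟨0, h⟩ else 0)
  relVal_mem _ _ := hc _

theorem exists_seq_pos_iInf_eq_zero (h0 : ∀ ε > (0:ℝ), (V ∩ Set.Ioo 0 ε).Nonempty) :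
    ∃ c : ℕ → ℝ, (∀ n, c n ∈ V ∧ 0 < c n) ∧ ⨅ n, c n = 0 := by
  choose c hcV hc using fun n : ℕ => h0 (1 / (n + 1)) Nat.one_div_pos_of_nat
  refine ⟨c, fun n => ⟨hcV n, (hc n).1⟩,
    le_antisymm ?_ (Real.iInf_nonneg fun n => (hc n).1.le)⟩
  by_contra! hpos
  obtain ⟨n, hn⟩ := exists_nat_one_div_lt hpos
  have := ciInf_le (f := c) ⟨0, by rintro _ ⟨m, rfl⟩; exact (hc m).1.le⟩ n
  linarith [(hc n).2]

end

/-- If 0 is not isolated in the Gödel set `V` and `L` contains a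
unary predicate `P`, then the sentence `F = ¬∀x P(x) ∧ ∀x ¬¬P(x)` has no
logically equivalent prenex sentence in `G_V`. -/
theorem stmt_5 {L : Lang} {V : Set ℝ} (hV : GodelSet V)
    (h0 : ∀ ε > (0:ℝ), (V ∩ Set.Ioo 0 ε).Nonempty) (P : L.Rel 1) :
    ¬ ∃ Q : Form L 0, IsPrenex Q ∧ DeltaFree Q ∧
        ∀ I : Interp L V,
          Form.sval I
            (Form.conj (Form.not (Form.all (atom1 P (Term.var 0))))
              (Form.all (Form.not (Form.not (atom1 P (Term.var 0)))))) =
          Form.sval I Q := by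
  rintro ⟨Q, hQ, hQΔ, hFQ⟩
  change ∀ I : Interp L V, Form.sval I (notAllAndAllNotNot P) = Form.sval I Q at hFQ
  obtain ⟨-, hV01, -, hV1⟩ := hV
  obtain ⟨c, hc, hc0⟩ := exists_seq_pos_iInf_eq_zero h0
  let I : Interp L V := Interp.ofSeq L c fun n => (hc n).1
  have hI : Form.sval I (notAllAndAllNotNot P) = 1 :=
    sval_notAllAndAllNotNot_eq_one I P (fun n => (hc n).2) hc0
  have hJ : Form.sval (I.glue 0 hV1) (notAllAndAllNotNot P) = 0 := by
    refine sval_notAllAndAllNotNot_eq_zero _ P ?_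
    have hone : ∀ n, raiseAbove 0 (c n) = 1 := fun n => raiseAbove_of_lt (hc n).2
    show 0 < ⨅ n : ℕ, raiseAbove 0 (c n)
    simp only [hone, ciInf_const, zero_lt_one]
  have hIJ := Form.val_le_val_glue_of_isPrenex hV01 I hV1 le_rfl zero_le_one hQ hQΔ Fin.elim0
  change Form.sval I Q ≤ Form.sval (I.glue 0 hV1) Q at hIJ
  rw [← hFQ, ← hFQ, hI, hJ] at hIJ
  norm_num at hIJ

end GodelPaper
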